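/- arXiv:2506.02732 — 5 statements merged into one kernel-verified Lean document; each statement's English description precedes it below -/
import Mathlib

section
/- For any matrix M in SL(2,F_8) with M ≠ 1, the order of M is 2 if tr(M) = 0, 3 if tr(M) = 1, 7 if tr(M) ∈ {u^3, u^5, u^6}, and 9 if tr(M) ∈ {u, u^2, u^4}. -/
/-!
By Cayley–Hamilton, `M ^ 2 = t • M - 1` for `t = tr M`, hence `M ^ (n + 2) = E_{n+1}(t) • M -
E_n(t) • 1`, where `E_n = dickson 2 1 n` are the Dickson polynomials of the second kind. In
characteristic 2, `E_6 = (X³ + X² + 1)²`, `E_5 + 1 = (X³ + X² + 1)(X² + X + 1)`,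
`E_8 = ((X + 1)(X³ + X + 1))²` and `E_7 + 1 = X⁷ + 1`. So `M ^ 7 = 1` when `t` is a root of
`X³ + X² + 1` (its roots are `u³, u⁵, u⁶`) and `M ^ 9 = 1` when `t` is a root of
`X³ + X + 1` (its roots are `u, u², u⁴`). In the second case `M ^ 3 ≠ 1`, because
`tr (M ^ 3) = t³ + t = 1` while `tr 1 = 0`.
-/

abbrev F8 : Type := GaloisField 2 3
abbrev SL8 := Matrix.SpecialLinearGroup (Fin 2) F8

open Polynomial

namespace Matrix

variable {R : Type*} [CommRing R]

theorem sq_eq_trace_smul_sub_det_smul_one (A : Matrix (Fin 2) (Fin 2) R) :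
    A ^ 2 = A.trace • A - A.det • (1 : Matrix (Fin 2) (Fin 2) R) := by
  ext i j
  fin_cases i <;> fin_cases j <;>
    simp [sq, mul_apply, trace_fin_two, det_fin_two] <;> ring

theorem pow_add_two_eq_eval_dickson (A : Matrix (Fin 2) (Fin 2) R) (n : ℕ) :
    A ^ (n + 2) = (dickson 2 A.det (n + 1)).eval A.trace • A -
      (A.det * (dickson 2 A.det n).eval A.trace) • (1 : Matrix (Fin 2) (Fin 2) R) := by
  induction n with
  | zero => norm_num [A.sq_eq_trace_smul_sub_det_smul_one]
  | succ n ih =>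
    rw [pow_succ, ih, sub_mul, smul_mul_assoc, smul_mul_assoc, ← sq,
      sq_eq_trace_smul_sub_det_smul_one, one_mul, dickson_add_two]
    simp only [eval_sub, eval_mul, eval_X, eval_C]
    module

end Matrix

namespace Matrix.SpecialLinearGroup

variable {R : Type*} [CommRing R]

theorem pow_add_two_eq_one_of_eval_dickson (A : SpecialLinearGroup (Fin 2) R) {n : ℕ}
    (h₁ : (dickson 2 (1 : R) (n + 1)).eval (A : Matrix (Fin 2) (Fin 2) R).trace = 0)
    (h₀ : (dickson 2 (1 : R) n).eval (A : Matrix (Fin 2) (Fin 2) R).trace = -1) :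
    A ^ (n + 2) = 1 := by
  have h := (A : Matrix (Fin 2) (Fin 2) R).pow_add_two_eq_eval_dickson n
  rw [A.det_coe, h₁, h₀] at h
  exact Subtype.ext (by simpa using h)

section CharTwo

variable [CharP R 2] (A : SpecialLinearGroup (Fin 2) R)

theorem orderOf_eq_two_of_trace_eq_zero (hA : A ≠ 1)
    (ht : (A : Matrix (Fin 2) (Fin 2) R).trace = 0) : orderOf A = 2 :=
  orderOf_eq_prime (A.pow_add_two_eq_one_of_eval_dickson (n := 0) (by simp [ht])
    (by norm_num; grind)) hA

theorem orderOf_eq_three_of_trace_eq_one (hA : A ≠ 1)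
    (ht : (A : Matrix (Fin 2) (Fin 2) R).trace = 1) : orderOf A = 3 :=
  orderOf_eq_prime (A.pow_add_two_eq_one_of_eval_dickson (n := 1) (by simp [ht]; grind)
    (by simp [ht]; grind)) hA

theorem orderOf_eq_seven_of_trace (hA : A ≠ 1) {t : R}
    (htr : (A : Matrix (Fin 2) (Fin 2) R).trace = t) (ht : t ^ 3 + t ^ 2 + 1 = 0) :
    orderOf A = 7 :=
  haveI : Fact (Nat.Prime 7) := ⟨by norm_num⟩
  orderOf_eq_prime (A.pow_add_two_eq_one_of_eval_dickson (n := 5) (by simp [htr]; grind)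
    (by simp [htr]; grind)) hA

theorem orderOf_eq_nine_of_trace {t : R}
    (htr : (A : Matrix (Fin 2) (Fin 2) R).trace = t) (ht : t ^ 3 + t + 1 = 0) :
    orderOf A = 9 := by
  have h₃ : ¬A ^ 3 ^ 1 = 1 := by
    intro h
    have h_trace :=
      congrArg (fun B : SpecialLinearGroup (Fin 2) R ↦ (B : Matrix (Fin 2) (Fin 2) R).trace) h
    simp [(A : Matrix (Fin 2) (Fin 2) R).pow_add_two_eq_eval_dickson 1, htr] at h_trace
    grind
  exact orderOf_eq_prime_pow h₃
    (A.pow_add_two_eq_one_of_eval_dickson (n := 7) (by simp [htr]; grind) (by simp [htr]; grind))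

end CharTwo

end Matrix.SpecialLinearGroup

theorem stmt_0 (u : F8) (hu : u ^ 3 + u + 1 = 0)
    (M : SL8) (hM : M ≠ 1) :
    (Matrix.trace (M : Matrix (Fin 2) (Fin 2) F8) = 0 → orderOf M = 2) ∧
    (Matrix.trace (M : Matrix (Fin 2) (Fin 2) F8) = 1 → orderOf M = 3) ∧
    (Matrix.trace (M : Matrix (Fin 2) (Fin 2) F8) ∈ ({u ^ 3, u ^ 5, u ^ 6} : Set F8) →
      orderOf M = 7) ∧
    (Matrix.trace (M : Matrix (Fin 2) (Fin 2) F8) ∈ ({u, u ^ 2, u ^ 4} : Set F8) →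
      orderOf M = 9) := by
  refine ⟨M.orderOf_eq_two_of_trace_eq_zero hM, M.orderOf_eq_three_of_trace_eq_one hM, ?_, ?_⟩
  · rintro (htr | htr | htr) <;> refine M.orderOf_eq_seven_of_trace hM htr ?_ <;> grind
  · rintro (htr | htr | htr) <;> refine M.orderOf_eq_nine_of_trace htr ?_ <;> grind
end

section
/- In ΣL(2,F_8), the Sylow 3-subgroup Δ = ⟨δ, A⟩ has center ⟨A^3⟩ of order 3, and the set of third powers of elements of Δ equals ⟨A^3⟩; moreover the subgroup ⟨δ, A^3⟩ is elementary abelian of order 9. -/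
/-- The action of a field automorphism of `F8` on `SL(2,F8)`, entrywise. -/
noncomputable def slAut (σ : F8 ≃+* F8) : SL8 ≃* SL8 where
  toFun := Matrix.SpecialLinearGroup.map (σ : F8 →+* F8)
  invFun := Matrix.SpecialLinearGroup.map (σ.symm : F8 →+* F8)
  left_inv := by
    intro M
    ext i j
    first
      | exact σ.symm_apply_apply ((M : Matrix (Fin 2) (Fin 2) F8) i j)
      | simp [Matrix.SpecialLinearGroup.map, MonoidHom.coe_mk, OneHom.coe_mk]
  right_inv := by
    intro M
    ext i j
    first
      | exact σ.apply_symm_apply ((M : Matrix (Fin 2) (Fin 2) F8) i j)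
      | simp [Matrix.SpecialLinearGroup.map, MonoidHom.coe_mk, OneHom.coe_mk]
  map_mul' := map_mul _

/-- The homomorphism `Aut(F8) → Aut(SL(2,F8))`. -/
noncomputable def φ : (F8 ≃+* F8) →* MulAut SL8 where
  toFun := slAut
  map_one' := by
    ext M i j
    rfl
  map_mul' := by
    intro σ τ
    ext M i j
    rfl

/-- `ΣL(2,8) = Aut(F8) ⋉ SL(2,F8)`. -/
abbrev SigmaL := SemidirectProduct SL8 (F8 ≃+* F8) φ

/-
The element `d = δ` acts on `a = A` by `d a d⁻¹ = a ^ 4`, with `a ^ 9 = d ^ 3 = 1`, so every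
element of `Δ = ⟨d, a⟩` has the form `a ^ j * d ^ i`, and products are computed by
`(a ^ j * d ^ i) * (a ^ l * d ^ k) = a ^ (j + 4 ^ i * l) * d ^ (i + k)`.
Such an element commutes with `a` iff `4 ^ i ≡ 1 [MOD 9]`, i.e. `3 ∣ i`, and `a ^ j` commutes with
`d` iff `4 * j ≡ j [MOD 9]`, i.e. `3 ∣ j`: the center is `⟨a ^ 3⟩`. The cube of `a ^ j * d ^ i` is
`a ^ (j * (1 + 4 ^ i + 4 ^ (2 * i)))`, and `1 + 4 ^ i + 4 ^ (2 * i) ≡ 0 [MOD 3]`.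
Finally `d` commutes with `a ^ 3`, and `⟨d⟩ ∩ ⟨a ^ 3⟩ = 1` because the two lie in the two
factors of the semidirect product, so `⟨d, a ^ 3⟩ ≅ C₃ × C₃`.
-/

open Subgroup

section SemiconjPow

variable {G : Type*} [Group G] {a d : G} {r : ℕ}

theorem pow_mul_pow_eq_of_mul_eq (h : d * a = a ^ r * d) (i j : ℕ) :
    d ^ i * a ^ j = a ^ (r ^ i * j) * d ^ i := by
  have hd : ∀ m, d * a ^ m = a ^ (r * m) * d := fun m => by
    rw [pow_mul]; exact SemiconjBy.pow_right h m
  induction i with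
  | zero => simp
  | succ i ih => rw [pow_succ', mul_assoc, ih, ← mul_assoc, hd, mul_assoc, pow_succ', mul_assoc]

theorem pow_mul_pow_mul_pow_mul_pow (h : d * a = a ^ r * d) (i j k l : ℕ) :
    a ^ j * d ^ i * (a ^ l * d ^ k) = a ^ (j + r ^ i * l) * d ^ (i + k) := by
  rw [mul_assoc, ← mul_assoc (d ^ i), pow_mul_pow_eq_of_mul_eq h, pow_add, pow_add]
  group

theorem exists_pow_mul_pow_of_mem_closure (hd : IsOfFinOrder d) (ha : IsOfFinOrder a)
    (h : d * a = a ^ r * d) {x : G} (hx : x ∈ closure {d, a}) :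
    ∃ j i : ℕ, x = a ^ j * d ^ i := by
  rw [← mem_toSubmonoid, closure_toSubmonoid_of_isOfFinOrder (by simp [hd, ha])] at hx
  induction hx using Submonoid.closure_induction_right with
  | one => exact ⟨0, 0, by simp⟩
  | mul_right x _ y hy ih =>
    obtain ⟨j, i, rfl⟩ := ih
    rcases hy with rfl | rfl
    · exact ⟨j, i + 1, by rw [pow_succ, mul_assoc]⟩
    · exact ⟨j + r ^ i, i, by
        simpa using pow_mul_pow_mul_pow_mul_pow h i j 0 1⟩

end SemiconjPow

theorem four_pow_mod_nine_eq_one_iff (i : ℕ) : 4 ^ i % 9 = 1 ↔ 3 ∣ i := by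
  rw [← Nat.mod_add_div i 3, pow_add, pow_mul, Nat.mul_mod, Nat.pow_mod (4 ^ 3)]
  have : i % 3 < 3 := Nat.mod_lt _ (by norm_num)
  interval_cases i % 3 <;> simp <;> omega

section OrderTwentySeven

variable {G : Type*} [Group G] {a d : G}

theorem commute_pow_three (ha : orderOf a = 9) (hda : d * a = a ^ 4 * d) : Commute d (a ^ 3) := by
  have h := pow_mul_pow_eq_of_mul_eq hda 1 3
  rwa [pow_one, pow_eq_pow_iff_modEq.mpr (by rw [ha]; decide : 4 ^ 1 * 3 ≡ 3 [MOD orderOf a])] at h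

theorem three_dvd_of_commute_pow_mul_pow (ha : orderOf a = 9) (hda : d * a = a ^ 4 * d) {i j : ℕ}
    (hc : a * (a ^ j * d ^ i) = a ^ j * d ^ i * a) : 3 ∣ i := by
  have hl := pow_mul_pow_mul_pow_mul_pow hda 0 1 i j
  have hr := pow_mul_pow_mul_pow_mul_pow hda i j 0 1
  simp only [pow_zero, one_mul, mul_one, pow_one, zero_add, add_zero] at hl hr
  have h' : a ^ (1 + j) = a ^ (j + 4 ^ i) := mul_right_cancel (hl.symm.trans (hc.trans hr))
  rw [pow_eq_pow_iff_modEq, ha, Nat.ModEq] at h'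
  exact (four_pow_mod_nine_eq_one_iff i).mp (by omega)

theorem three_dvd_of_commute_pow (ha : orderOf a = 9) (hda : d * a = a ^ 4 * d) {j : ℕ}
    (hc : d * a ^ j = a ^ j * d) : 3 ∣ j := by
  have h := pow_mul_pow_eq_of_mul_eq hda 1 j
  have h' : a ^ (4 * j) = a ^ j := by simpa [hc] using h.symm
  rw [pow_eq_pow_iff_modEq, ha, Nat.ModEq] at h'
  omega

theorem map_subtype_center_closure_pair (ha : orderOf a = 9) (hd : orderOf d = 3)
    (hda : d * a = a ^ 4 * d) :
    (center (closure {d, a})).map (closure {d, a}).subtype = closure {a ^ 3} := by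
  have hΔ : ∀ {x}, x ∈ closure {d, a} → ∃ j i : ℕ, x = a ^ j * d ^ i :=
    exists_pow_mul_pow_of_mem_closure (orderOf_pos_iff.mp (by omega))
      (orderOf_pos_iff.mp (by omega)) hda
  apply le_antisymm
  · rintro _ ⟨z, hz, rfl⟩
    have hzc : ∀ g ∈ closure {d, a}, g * z = z * g := fun g hg =>
      congrArg Subtype.val (mem_center_iff.mp hz ⟨g, hg⟩)
    obtain ⟨j, i, hz'⟩ := hΔ z.2
    have hi : 3 ∣ i := three_dvd_of_commute_pow_mul_pow ha hda
      (by simpa [hz'] using hzc a (subset_closure (by simp)))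
    have hdi : d ^ i = 1 := orderOf_dvd_iff_pow_eq_one.mp (by rwa [hd])
    have hj : 3 ∣ j := three_dvd_of_commute_pow ha hda
      (by simpa [hz', hdi] using hzc d (subset_closure (by simp)))
    obtain ⟨t, rfl⟩ := hj
    rw [coe_subtype, hz', hdi, mul_one, pow_mul]
    exact pow_mem (mem_closure_singleton_self _) t
  · rw [closure_le, Set.singleton_subset_iff]
    have hc : a ^ 3 ∈ centralizer (closure {d, a}) := by
      rw [centralizer_closure, mem_centralizer_iff]
      rintro g (rfl | rfl)
      · exact commute_pow_three ha hda
      · exact Commute.self_pow g 3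
    exact ⟨⟨a ^ 3, pow_mem (subset_closure (by simp)) 3⟩,
      mem_center_iff.mpr fun g => Subtype.ext (mem_centralizer_iff.mp hc g g.2), rfl⟩

theorem pow_three_pow_mul_pow_mem_closure (hd : orderOf d = 3) (hda : d * a = a ^ 4 * d)
    (i j : ℕ) : (a ^ j * d ^ i) ^ 3 ∈ closure {a ^ 3} := by
  have h4 : 4 ^ i % 3 = 1 := by rw [Nat.pow_mod]; norm_num
  obtain ⟨q, hq⟩ : ∃ q, 4 ^ i = 3 * q + 1 := ⟨4 ^ i / 3, by omega⟩
  have hd3 : d ^ (i + (i + i)) = 1 := by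
    rw [show i + (i + i) = 3 * i by ring, pow_mul, ← hd, pow_orderOf_eq_one, one_pow]
  rw [pow_three (a ^ j * d ^ i), pow_mul_pow_mul_pow_mul_pow hda,
    pow_mul_pow_mul_pow_mul_pow hda, hd3, mul_one, hq,
    show j + (3 * q + 1) * (j + (3 * q + 1) * j) = 3 * (j * (3 * q ^ 2 + 3 * q + 1)) by ring,
    pow_mul]
  exact pow_mem (mem_closure_singleton_self _) _

theorem image_pow_three_closure_pair (ha : orderOf a = 9) (hd : orderOf d = 3)
    (hda : d * a = a ^ 4 * d) :
    (fun g : G => g ^ 3) '' (closure {d, a} : Set G) = closure {a ^ 3} := by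
  ext x
  constructor
  · rintro ⟨g, hg, rfl⟩
    obtain ⟨j, i, rfl⟩ := exists_pow_mul_pow_of_mem_closure (orderOf_pos_iff.mp (by omega))
      (orderOf_pos_iff.mp (by omega)) hda hg
    exact pow_three_pow_mul_pow_mem_closure hd hda i j
  · intro hx
    obtain ⟨k, rfl⟩ := mem_zpowers_iff.mp ((zpowers_eq_closure (a ^ 3)).symm ▸ hx)
    exact ⟨a ^ k, zpow_mem (subset_closure (by simp)) k, by
      simp only [← zpow_natCast, ← zpow_mul, mul_comm]⟩

end OrderTwentySeven

section Commute

variable {G : Type*} [Group G] {x y : G}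

theorem Commute.mul_comm_of_mem_closure_pair (h : Commute x y) {z w : G}
    (hz : z ∈ closure {x, y}) (hw : w ∈ closure {x, y}) : z * w = w * z := by
  have hxy : ∀ z ∈ ({x, y} : Set G), ∀ w ∈ ({x, y} : Set G), z * w = w * z := by
    rintro z (rfl | rfl) w (rfl | rfl)
    exacts [rfl, h.eq, h.symm.eq, rfl]
  exact Set.centralizer_centralizer_comm_of_comm hxy _
    (closure_le_centralizer_centralizer _ hz) _ (closure_le_centralizer_centralizer _ hw)

theorem Commute.pow_eq_one_of_mem_closure_pair (h : Commute x y) {n : ℕ} (hx : x ^ n = 1)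
    (hy : y ^ n = 1) {z : G} (hz : z ∈ closure {x, y}) : z ^ n = 1 := by
  induction hz using closure_induction with
  | mem z hz => rcases hz with rfl | rfl <;> assumption
  | one => exact one_pow n
  | mul z w hz hw ihz ihw =>
    rw [Commute.mul_pow (h.mul_comm_of_mem_closure_pair hz hw), ihz, ihw, one_mul]
  | inv z _ ih => rw [inv_pow, ih, inv_one]

theorem Commute.natCard_closure_pair (h : Commute x y) (hxy : Disjoint (zpowers x) (zpowers y)) :
    Nat.card (closure {x, y}) = orderOf x * orderOf y := by
  have hcomm : ∀ m n, Commute ((zpowers x).subtype m) ((zpowers y).subtype n) := by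
    rintro ⟨_, i, rfl⟩ ⟨_, j, rfl⟩
    exact h.zpow_zpow i j
  have hf :=
    (MonoidHom.noncommCoprod_injective (zpowers x).subtype (zpowers y).subtype hcomm).mpr
    ⟨Subtype.val_injective, Subtype.val_injective, by rwa [range_subtype, range_subtype]⟩
  have hrange :
      ((zpowers x).subtype.noncommCoprod (zpowers y).subtype hcomm).range = closure {x, y} := by
    rw [MonoidHom.noncommCoprod_range, range_subtype, range_subtype, zpowers_eq_closure,
      zpowers_eq_closure, ← Subgroup.closure_union, Set.singleton_union]
  rw [← hrange, ← Nat.card_congr (MonoidHom.ofInjective hf).toEquiv, Nat.card_prod,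
    Nat.card_zpowers, Nat.card_zpowers]

end Commute

theorem F8.pow_eight (x : F8) : x ^ 8 = x := by
  let _ : Fintype F8 := Fintype.ofFinite F8
  have hcard : Fintype.card F8 = 8 := by
    rw [← Nat.card_eq_fintype_card, GaloisField.card 2 3 (by norm_num)]
    norm_num
  simpa [hcard] using FiniteField.pow_card x

theorem orderOf_eq_three_of_apply_eq_pow_four {u : F8} (hu : u ^ 3 = u + 1) {σ : F8 ≃+* F8}
    (hσ : ∀ x, σ x = x ^ 4) : orderOf σ = 3 := by
  have hσ3 : σ ^ 3 = 1 := by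
    ext x
    change σ (σ (σ x)) = x
    rw [hσ, hσ, hσ, ← pow_mul, ← pow_mul, show 4 * 4 * 4 = 8 * 8 by rfl, pow_mul, F8.pow_eight,
      F8.pow_eight]
  have hσ1 : σ ≠ 1 := by
    intro h
    have hu4 : u ^ 4 = u := by simpa [h] using (hσ u).symm
    have hu0 : u = 0 := by
      apply pow_eq_zero_iff (n := 2) (by norm_num) |>.mp
      linear_combination hu4 - u * hu
    simp [hu0] at hu
  exact orderOf_eq_prime hσ3 hσ1

namespace CharTwo

open Matrix

variable {R : Type*} [CommRing R] [CharP R 2]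

theorem zero_one_one_one_pow_three : (!![0, 1; 1, 1] : Matrix (Fin 2) (Fin 2) R) ^ 3 = 1 := by
  rw [pow_three, mul_fin_two, mul_fin_two, one_fin_two]
  ext i j; fin_cases i <;> fin_cases j <;> simp

variable {u : R} (hu : u ^ 3 = u + 1)
include hu

theorem pow_three_eq_zero_one_one_one : !![u ^ 2, u; u, u ^ 4] ^ 3 = !![0, 1; 1, 1] := by
  have := two_eq_zero (R := R)
  rw [pow_three, mul_fin_two, mul_fin_two]
  ext i j; fin_cases i <;> fin_cases j <;> simp <;> grind

theorem map_pow_four_eq_pow_four :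
    !![u ^ 2, u; u, u ^ 4].map (· ^ 4) = !![u ^ 2, u; u, u ^ 4] ^ 4 := by
  have := two_eq_zero (R := R)
  rw [pow_succ !![u ^ 2, u; u, u ^ 4] 3, pow_three_eq_zero_one_one_one hu, mul_fin_two]
  ext i j; fin_cases i <;> fin_cases j <;> simp <;> grind

end CharTwo

theorem orderOf_eq_nine_of_coe_eq {u : F8} (hu : u ^ 3 = u + 1) {A : SL8}
    (hA : (A : Matrix (Fin 2) (Fin 2) F8) = !![u ^ 2, u; u, u ^ 4]) : orderOf A = 9 := by
  have hA3 : ((A ^ 3 : SL8) : Matrix (Fin 2) (Fin 2) F8) = !![0, 1; 1, 1] := by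
    rw [Matrix.SpecialLinearGroup.coe_pow, hA, CharTwo.pow_three_eq_zero_one_one_one hu]
  refine orderOf_eq_prime_pow (p := 3) (n := 1) (fun h => ?_) ?_
  · have h00 := congrFun (congrFun (congrArg Subtype.val h) 0) 0
    simp [hA3] at h00
  · ext : 1
    rw [show 3 ^ (1 + 1) = 3 * 3 by rfl, pow_mul, Matrix.SpecialLinearGroup.coe_pow, hA3,
      CharTwo.zero_one_one_one_pow_three, Matrix.SpecialLinearGroup.coe_one]

theorem φ_apply_eq_pow_four {u : F8} (hu : u ^ 3 = u + 1) {σ : F8 ≃+* F8}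
    (hσ : ∀ x, σ x = x ^ 4) {A : SL8}
    (hA : (A : Matrix (Fin 2) (Fin 2) F8) = !![u ^ 2, u; u, u ^ 4]) : φ σ A = A ^ 4 := by
  apply Subtype.ext
  change (A : Matrix (Fin 2) (Fin 2) F8).map σ = _
  rw [Matrix.SpecialLinearGroup.coe_pow, hA, ← CharTwo.map_pow_four_eq_pow_four hu]
  exact congrArg _ (funext hσ)

namespace SemidirectProduct

variable {N H : Type*} [Group N] [Group H] {ψ : H →* MulAut N}

theorem inr_mul_inl (g : H) (n : N) :
    (inr g * inl n : N ⋊[ψ] H) = inl (ψ g n) * inr g := by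
  rw [inl_aut, map_inv, inv_mul_cancel_right]

theorem disjoint_range_inl_range_inr :
    Disjoint (inl : N →* N ⋊[ψ] H).range (inr : H →* N ⋊[ψ] H).range := by
  rw [disjoint_def]
  rintro _ ⟨n, rfl⟩ ⟨g, hg⟩
  have hg1 : g = 1 := by simpa using congrArg right hg
  rw [← hg, hg1, map_one]

end SemidirectProduct

theorem stmt_9_general (u : F8) (hu : u ^ 3 = u + 1)
    (δf : F8 ≃+* F8) (hδ : ∀ x : F8, δf x = x ^ 4)
    (A : SL8) (hA : (A : Matrix (Fin 2) (Fin 2) F8) = !![u ^ 2, u; u, u ^ 4])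
    (d a : SigmaL) (hd : d = SemidirectProduct.inr δf) (ha : a = SemidirectProduct.inl A)
    (Δ : Subgroup SigmaL) (hΔ : Δ = Subgroup.closure {d, a}) :
    (Subgroup.center Δ).map Δ.subtype = Subgroup.closure {a ^ 3} ∧
    Nat.card (Subgroup.closure {a ^ 3} : Subgroup SigmaL) = 3 ∧
    (fun g : SigmaL => g ^ 3) '' (Δ : Set SigmaL)
      = ((Subgroup.closure {a ^ 3} : Subgroup SigmaL) : Set SigmaL) ∧
    Nat.card (Subgroup.closure {d, a ^ 3} : Subgroup SigmaL) = 9 ∧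
    (∀ x ∈ Subgroup.closure {d, a ^ 3}, x ^ 3 = (1 : SigmaL)) ∧
    (∀ x ∈ Subgroup.closure {d, a ^ 3}, ∀ y ∈ Subgroup.closure {d, a ^ 3}, x * y = y * x) := by
  subst hΔ
  have hd3 : orderOf d = 3 := by
    rw [hd, orderOf_injective _ SemidirectProduct.inr_injective,
      orderOf_eq_three_of_apply_eq_pow_four hu hδ]
  have ha9 : orderOf a = 9 := by
    rw [ha, orderOf_injective _ SemidirectProduct.inl_injective, orderOf_eq_nine_of_coe_eq hu hA]
  have hda : d * a = a ^ 4 * d := by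
    rw [hd, ha, SemidirectProduct.inr_mul_inl, φ_apply_eq_pow_four hu hδ hA, map_pow]
  have ha3 : orderOf (a ^ 3) = 3 := by
    rw [orderOf_pow_of_dvd (by norm_num) (by rw [ha9]; norm_num), ha9]
  have hdisj : Disjoint (zpowers d) (zpowers (a ^ 3)) := by
    rw [hd, ha]
    exact SemidirectProduct.disjoint_range_inl_range_inr.symm.mono
      (zpowers_le.mpr (MonoidHom.mem_range.mpr ⟨δf, rfl⟩))
      (zpowers_le.mpr (pow_mem (MonoidHom.mem_range.mpr ⟨A, rfl⟩) 3))
  have hcomm := commute_pow_three ha9 hda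
  refine ⟨map_subtype_center_closure_pair ha9 hd3 hda, ?_,
    image_pow_three_closure_pair ha9 hd3 hda, ?_, fun x hx => ?_,
    fun x hx y hy => hcomm.mul_comm_of_mem_closure_pair hx hy⟩
  · rw [← zpowers_eq_closure, Nat.card_zpowers, ha3]
  · rw [hcomm.natCard_closure_pair hdisj, hd3, ha3]
  · exact hcomm.pow_eq_one_of_mem_closure_pair (orderOf_dvd_iff_pow_eq_one.mp hd3.dvd)
      (orderOf_dvd_iff_pow_eq_one.mp ha3.dvd) hx

theorem stmt_9 (u : F8) (hu : u ^ 3 = u + 1) (hu7 : orderOf u = 7)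
    (δf : F8 ≃+* F8) (hδ : ∀ x : F8, δf x = x ^ 4)
    (A : SL8) (hA : (A : Matrix (Fin 2) (Fin 2) F8) = !![u ^ 2, u; u, u ^ 4])
    (d a : SigmaL) (hd : d = SemidirectProduct.inr δf) (ha : a = SemidirectProduct.inl A)
    (Δ : Subgroup SigmaL) (hΔ : Δ = Subgroup.closure {d, a}) :
    (Subgroup.center Δ).map Δ.subtype = Subgroup.closure {a ^ 3} ∧
    Nat.card (Subgroup.closure {a ^ 3} : Subgroup SigmaL) = 3 ∧
    (fun g : SigmaL => g ^ 3) '' (Δ : Set SigmaL)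
      = ((Subgroup.closure {a ^ 3} : Subgroup SigmaL) : Set SigmaL) ∧
    Nat.card (Subgroup.closure {d, a ^ 3} : Subgroup SigmaL) = 9 ∧
    (∀ x ∈ Subgroup.closure {d, a ^ 3}, x ^ 3 = (1 : SigmaL)) ∧
    (∀ x ∈ Subgroup.closure {d, a ^ 3}, ∀ y ∈ Subgroup.closure {d, a ^ 3}, x * y = y * x) :=
  stmt_9_general u hu δf hδ A hA d a hd ha Δ hΔ
end

section
/- The center of the Ree root group Ξ_θ(K) is exactly Z = {(0,0,c) : c ∈ K}; in particular Ξ_θ(K) is nilpotent of class at most 3, and if |K| = 3 then the commutator subgroup of Ξ equals Z and Ξ is nilpotent of class 2. -/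
/-- Element of the Ree root group `Ξ_θ(K)`: a triple `(a,b,c)` of elements of `K`. -/
@[ext]
structure ReeGp (K : Type*) [Field K] (θ : K →+* K) where
  a : K
  b : K
  c : K

namespace ReeGp

variable {K : Type*} [Field K] {θ : K →+* K}

instance : Mul (ReeGp K θ) :=
  ⟨fun α ξ => ⟨α.a + ξ.a, α.b + ξ.b + α.a * θ ξ.a,
    α.c + ξ.c + α.a * ξ.b - α.b * ξ.a - α.a * ξ.a * θ ξ.a⟩⟩

instance : One (ReeGp K θ) := ⟨⟨0, 0, 0⟩⟩

instance : Inv (ReeGp K θ) := ⟨fun α => ⟨-α.a, θ α.a * α.a - α.b, -α.c⟩⟩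

@[simp] lemma mul_a (α ξ : ReeGp K θ) : (α * ξ).a = α.a + ξ.a := rfl
@[simp] lemma mul_b (α ξ : ReeGp K θ) : (α * ξ).b = α.b + ξ.b + α.a * θ ξ.a := rfl
@[simp] lemma mul_c (α ξ : ReeGp K θ) :
    (α * ξ).c = α.c + ξ.c + α.a * ξ.b - α.b * ξ.a - α.a * ξ.a * θ ξ.a := rfl
@[simp] lemma one_a : (1 : ReeGp K θ).a = 0 := rfl
@[simp] lemma one_b : (1 : ReeGp K θ).b = 0 := rfl
@[simp] lemma one_c : (1 : ReeGp K θ).c = 0 := rfl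
@[simp] lemma inv_a (α : ReeGp K θ) : (α⁻¹).a = -α.a := rfl
@[simp] lemma inv_b (α : ReeGp K θ) : (α⁻¹).b = θ α.a * α.a - α.b := rfl
@[simp] lemma inv_c (α : ReeGp K θ) : (α⁻¹).c = -α.c := rfl

instance : Group (ReeGp K θ) where
  mul_assoc α ξ ψ := by
    ext <;> simp [map_add] <;> ring
  one_mul α := by ext <;> simp
  mul_one α := by ext <;> simp
  inv_mul_cancel α := by ext <;> simp [map_neg] <;> ring

end ReeGp

/-!
Every commutator has `a = 0` and `b = g.a θ(h.a) − h.a θ(g.a)`, so the commutator subgroup lies in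
`{a = 0}`, and commutators with elements of `{a = 0}` have the shape `(0, 0, c)`, which are central:
the class is at most 3. Comparing the `c`-coordinates of `z (0,1,0)` and `z (1,0,0)` with the
reversed products gives `2 z.a = 2 z.b = 0` for central `z`, and `⁅(1,0,0), (0,t,0)⁆ = (0,0,2t)`
puts the whole centre inside the commutator subgroup. When `|K| = 3` the only ring endomorphism of `K`
is the identity, so `b` vanishes on all commutators and the commutator subgroup is the centre.
-/

theorem RingHom.eq_id_of_natCard_eq {R : Type*} [Ring R] [_root_.Finite R] {n : ℕ} [CharP R n]
    (h : Nat.card R = n) (θ : R →+* R) : θ = RingHom.id R := by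
  have := Fintype.ofFinite R
  have hcast := (ZMod.castHom_bijective R (Nat.card_eq_fintype_card (α := R) ▸ h)).surjective
  ext x
  obtain ⟨y, rfl⟩ := hcast x
  exact RingHom.congr_fun (Subsingleton.elim (θ.comp (ZMod.castHom (dvd_refl n) R))
    ((RingHom.id R).comp (ZMod.castHom (dvd_refl n) R))) y

namespace ReeGp

variable {K : Type*} [Field K] {θ : K →+* K}

open Subgroup
open scoped commutatorElement

@[simp] lemma commutatorElement_a (g h : ReeGp K θ) : ⁅g, h⁆.a = 0 := by
  simp [commutatorElement_def]

lemma commutatorElement_b (g h : ReeGp K θ) : ⁅g, h⁆.b = g.a * θ h.a - h.a * θ g.a := by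
  simp only [commutatorElement_def, mul_a, mul_b, inv_a, inv_b, map_neg]
  ring

lemma commutatorElement_mk_one_mk_zero (t : K) :
    ⁅(⟨1, 0, 0⟩ : ReeGp K θ), (⟨0, t, 0⟩ : ReeGp K θ)⁆ = ⟨0, 0, 2 * t⟩ := by
  ext <;> simp [commutatorElement_def]; ring

lemma mem_center_of_a_eq_zero_of_b_eq_zero {z : ReeGp K θ} (ha : z.a = 0) (hb : z.b = 0) :
    z ∈ center (ReeGp K θ) :=
  mem_center_iff.2 fun g => by ext <;> simp [ha, hb]; ring

lemma mem_center_iff_of_two_ne_zero (h2 : (2 : K) ≠ 0) (z : ReeGp K θ) :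
    z ∈ center (ReeGp K θ) ↔ z.a = 0 ∧ z.b = 0 := by
  refine ⟨fun hz => ?_, fun h => mem_center_of_a_eq_zero_of_b_eq_zero h.1 h.2⟩
  have hb' := congrArg ReeGp.c (mem_center_iff.1 hz ⟨0, 1, 0⟩)
  have ha' := congrArg ReeGp.c (mem_center_iff.1 hz ⟨1, 0, 0⟩)
  simp only [mul_c, mul_zero, mul_one, zero_mul, map_one, map_zero] at hb' ha'
  have ha : z.a = 0 := (mul_eq_zero.1 (by linear_combination -hb' : 2 * z.a = 0)).resolve_left h2
  rw [ha] at ha'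
  exact ⟨ha, (mul_eq_zero.1 (by linear_combination ha' : 2 * z.b = 0)).resolve_left h2⟩

lemma commutatorElement_mem_center_of_a_eq_zero {g : ReeGp K θ} (hg : g.a = 0)
    (h : ReeGp K θ) : ⁅g, h⁆ ∈ center (ReeGp K θ) :=
  mem_center_of_a_eq_zero_of_b_eq_zero (commutatorElement_a g h) (by simp [commutatorElement_b, hg])

variable (K θ) in
def aHom : ReeGp K θ →* Multiplicative K where
  toFun z := Multiplicative.ofAdd z.a
  map_one' := rfl
  map_mul' _ _ := rfl

lemma a_eq_zero_of_mem_commutator {g : ReeGp K θ} (hg : g ∈ commutator (ReeGp K θ)) :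
    g.a = 0 :=
  Abelianization.commutator_subset_ker (aHom K θ) hg

lemma lowerCentralSeries_two_le_center :
    (⊤ : Subgroup (ReeGp K θ)).lowerCentralSeries 2 ≤ center (ReeGp K θ) := by
  rw [Subgroup.lowerCentralSeries_succ, top_lowerCentralSeries_one, commutator_le]
  exact fun g hg h _ => commutatorElement_mem_center_of_a_eq_zero (a_eq_zero_of_mem_commutator hg) h

lemma lowerCentralSeries_three_eq_bot :
    (⊤ : Subgroup (ReeGp K θ)).lowerCentralSeries 3 = ⊥ :=
  Subgroup.lowerCentralSeries_succ_eq_bot ⊤ lowerCentralSeries_two_le_center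

lemma center_le_commutator (h2 : (2 : K) ≠ 0) : center (ReeGp K θ) ≤ commutator (ReeGp K θ) := by
  intro z hz
  obtain ⟨ha, hb⟩ := (mem_center_iff_of_two_ne_zero h2 z).1 hz
  have hz : ⁅(⟨1, 0, 0⟩ : ReeGp K θ), (⟨0, z.c / 2, 0⟩ : ReeGp K θ)⁆ = z := by
    rw [commutatorElement_mk_one_mk_zero, mul_div_cancel₀ _ h2]
    ext <;> simp [ha, hb]
  rw [← hz, commutator_def]
  exact commutator_mem_commutator (mem_top _) (mem_top _)

lemma commutator_ne_bot (h2 : (2 : K) ≠ 0) : commutator (ReeGp K θ) ≠ ⊥ := by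
  refine (ne_bot_iff_exists_ne_one).2 ⟨⟨_, center_le_commutator h2
    (mem_center_of_a_eq_zero_of_b_eq_zero (z := ⟨0, 0, 1⟩) rfl rfl)⟩, ?_⟩
  simp [Subtype.ext_iff, ReeGp.ext_iff]

lemma commutator_le_center_of_id :
    commutator (ReeGp K (RingHom.id K)) ≤ center (ReeGp K (RingHom.id K)) := by
  rw [commutator_def, commutator_le]
  exact fun g _ h _ => mem_center_of_a_eq_zero_of_b_eq_zero (commutatorElement_a g h)
    (by rw [commutatorElement_b]; simp [mul_comm])

end ReeGp

theorem stmt_16_general {K : Type*} [Field K] [CharP K 3] (θ : K →+* K) :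
    (∀ z : ReeGp K θ, z ∈ Subgroup.center (ReeGp K θ) ↔ z.a = 0 ∧ z.b = 0) ∧
    Group.IsNilpotent (ReeGp K θ) ∧
    Subgroup.lowerCentralSeries (⊤ : Subgroup (ReeGp K θ)) 3 = ⊥ ∧
    (Nat.card K = 3 →
      commutator (ReeGp K θ) = Subgroup.center (ReeGp K θ) ∧
      Subgroup.lowerCentralSeries (⊤ : Subgroup (ReeGp K θ)) 2 = ⊥ ∧
      Subgroup.lowerCentralSeries (⊤ : Subgroup (ReeGp K θ)) 1 ≠ ⊥) := by
  have h2 : (2 : K) ≠ 0 := Ring.two_ne_zero (by rw [ringChar.eq K 3]; decide)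
  refine ⟨ReeGp.mem_center_iff_of_two_ne_zero h2,
    Subgroup.nilpotent_iff_lowerCentralSeries.2 ⟨3, ReeGp.lowerCentralSeries_three_eq_bot⟩,
    ReeGp.lowerCentralSeries_three_eq_bot, fun hK => ?_⟩
  have : Finite K := Nat.finite_of_card_ne_zero (by omega)
  obtain rfl := RingHom.eq_id_of_natCard_eq hK θ
  have hZ := le_antisymm ReeGp.commutator_le_center_of_id (ReeGp.center_le_commutator h2)
  refine ⟨hZ, Subgroup.lowerCentralSeries_succ_eq_bot ⊤ ?_, ?_⟩ <;>
    rw [Subgroup.top_lowerCentralSeries_one]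
  · exact hZ.le
  · exact ReeGp.commutator_ne_bot h2

theorem stmt_16 {K : Type*} [Field K] [CharP K 3] (θ : K →+* K)
    (hθ : ∀ x : K, θ (θ x) = x ^ 3) :
    (∀ z : ReeGp K θ, z ∈ Subgroup.center (ReeGp K θ) ↔ z.a = 0 ∧ z.b = 0) ∧
    Group.IsNilpotent (ReeGp K θ) ∧
    Subgroup.lowerCentralSeries (⊤ : Subgroup (ReeGp K θ)) 3 = ⊥ ∧
    (Nat.card K = 3 →
      commutator (ReeGp K θ) = Subgroup.center (ReeGp K θ) ∧
      Subgroup.lowerCentralSeries (⊤ : Subgroup (ReeGp K θ)) 2 = ⊥ ∧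
      Subgroup.lowerCentralSeries (⊤ : Subgroup (ReeGp K θ)) 1 ≠ ⊥) :=
  stmt_16_general θ
end

section
/- Let K have characteristic 3 and |K| > 3 with Tits endomorphism θ. Then the commutator subgroup of the Ree root group Ξ_θ(K) equals {(0,b,c) : b,c ∈ K}. -/
/-!
The projection `(a, b, c) ↦ a` is a homomorphism onto the abelian group `(K, +)`, so commutators
have `a = 0`. Conversely, `⁅(0, c, 0), (1, 0, 0)⁆ = (0, 0, -2c) = (0, 0, c)` in characteristic 3, so
the centre lies in the commutator subgroup and it suffices that the `b`-coordinates of commutators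
exhaust `K`. The commutator of `(s a₀, 0, 0)` and `(s, 0, 0)` has `b`-coordinate
`s θ(s) (a₀ - θ a₀)`, and `s θ(s)` takes every square value `t²` (at `s = θ t / t`). As `|K| > 3`,
`θ` is not the identity, so `a₀ - θ a₀ ≠ 0` for some `a₀`, and the squares generate `(K, +)`.
-/

open scoped commutatorElement

/-- The squares generate `(R, +)` because `2u = (u + 1)² - u² - 1`. -/
lemma AddSubgroup.eq_top_of_forall_sq_mem {R : Type*} [Field R] (h2 : (2 : R) ≠ 0)
    (S : AddSubgroup R) (hS : ∀ t : R, t ^ 2 ∈ S) : S = ⊤ := by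
  refine eq_top_iff.2 fun u _ => ?_
  have h : (u / 2 + 1) ^ 2 - (u / 2) ^ 2 - 1 ^ 2 ∈ S :=
    S.sub_mem (S.sub_mem (hS _) (hS _)) (hS _)
  convert h using 1
  field_simp
  ring

lemma finite_and_card_le_three_of_forall_pow_three_eq_self {K : Type*} [Field K]
    (h : ∀ x : K, x ^ 3 = x) : Finite K ∧ Nat.card K ≤ 3 := by
  have hsurj : Function.Surjective ![(0 : K), 1, -1] := by
    intro x
    have hx : x * (x - 1) * (x + 1) = 0 := by linear_combination h x
    rcases mul_eq_zero.1 hx with hx | hx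
    · rcases mul_eq_zero.1 hx with hx | hx
      · exact ⟨0, hx.symm⟩
      · exact ⟨1, (sub_eq_zero.1 hx).symm⟩
    · exact ⟨2, (eq_neg_of_add_eq_zero_left hx).symm⟩
  exact ⟨Finite.of_surjective _ hsurj,
    (Nat.card_le_card_of_surjective _ hsurj).trans_eq (Nat.card_fin 3)⟩

lemma RingHom.exists_mul_map_eq_sq {K : Type*} [Field K] {θ : K →+* K}
    (hθ : ∀ x : K, θ (θ x) = x ^ 3) (t : K) : ∃ s : K, s * θ s = t ^ 2 := by
  rcases eq_or_ne t 0 with rfl | ht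
  · exact ⟨0, by simp⟩
  refine ⟨θ t / t, ?_⟩
  have hθt : θ t ≠ 0 := (map_ne_zero θ).2 ht
  rw [map_div₀, hθ t]
  field_simp

lemma RingHom.exists_map_ne_self {K : Type*} [Field K] {θ : K →+* K}
    (hθ : ∀ x : K, θ (θ x) = x ^ 3) (hK : 3 < Nat.card K ∨ Infinite K) : ∃ a : K, θ a ≠ a := by
  by_contra! hfix
  obtain ⟨hfin, hcard⟩ := finite_and_card_le_three_of_forall_pow_three_eq_self fun x => by
    rw [← hθ, hfix, hfix]
  rcases hK with hK | hK
  · omega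
  · exact not_finite K

namespace ReeGp

variable {K : Type*} [Field K] {θ : K →+* K}

def fstHom : ReeGp K θ →* Multiplicative K where
  toFun x := Multiplicative.ofAdd x.a
  map_one' := rfl
  map_mul' _ _ := rfl

lemma a_eq_zero_of_mem_commutator_s17 {x : ReeGp K θ} (hx : x ∈ commutator (ReeGp K θ)) : x.a = 0 :=
  Abelianization.commutator_subset_ker (fstHom (θ := θ)) hx

lemma commutatorElement_mk_a (a x : K) :
    ⁅(⟨a, 0, 0⟩ : ReeGp K θ), (⟨x, 0, 0⟩ : ReeGp K θ)⁆ =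
      ⟨0, a * θ x - x * θ a, a ^ 2 * θ x - x ^ 2 * θ a⟩ := by
  ext <;> simp only [commutatorElement_def, mul_a, mul_b, mul_c, inv_a, inv_b, inv_c, map_neg]
    <;> ring

lemma commutatorElement_mk_b (b x : K) :
    ⁅(⟨0, b, 0⟩ : ReeGp K θ), (⟨x, 0, 0⟩ : ReeGp K θ)⁆ = ⟨0, 0, -(2 * b * x)⟩ := by
  ext <;> simp only [commutatorElement_def, mul_a, mul_b, mul_c, inv_a, inv_b, inv_c, map_neg,
    map_zero]
    <;> ring

lemma mk_zero_zero_mem_commutator [CharP K 3] (c : K) :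
    (⟨0, 0, c⟩ : ReeGp K θ) ∈ commutator (ReeGp K θ) := by
  have h3 : (3 : K) = 0 := by exact_mod_cast CharP.cast_eq_zero K 3
  have hc : (⟨0, 0, c⟩ : ReeGp K θ) = ⁅(⟨0, c, 0⟩ : ReeGp K θ), (⟨1, 0, 0⟩ : ReeGp K θ)⁆ := by
    rw [commutatorElement_mk_b]
    ext
    · rfl
    · rfl
    · linear_combination c * h3
  rw [hc]
  exact Subgroup.commutator_mem_commutator (Subgroup.mem_top _) (Subgroup.mem_top _)

def commutatorB : AddSubgroup K where
  carrier := {b | ∃ c, (⟨0, b, c⟩ : ReeGp K θ) ∈ commutator (ReeGp K θ)}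
  zero_mem' := ⟨0, Subgroup.one_mem _⟩
  add_mem' := by
    rintro b b' ⟨c, hc⟩ ⟨c', hc'⟩
    refine ⟨c + c', ?_⟩
    convert Subgroup.mul_mem _ hc hc' using 1
    ext <;> simp
  neg_mem' := by
    rintro b ⟨c, hc⟩
    refine ⟨-c, ?_⟩
    convert Subgroup.inv_mem _ hc using 1
    ext <;> simp

lemma mk_zero_mem_commutator_iff [CharP K 3] (b c : K) :
    (⟨0, b, c⟩ : ReeGp K θ) ∈ commutator (ReeGp K θ) ↔ b ∈ commutatorB (θ := θ) := by
  refine ⟨fun h => ⟨c, h⟩, fun ⟨c', hc'⟩ => ?_⟩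
  convert Subgroup.mul_mem _ hc' (mk_zero_zero_mem_commutator (θ := θ) (c - c')) using 1
  ext <;> simp

lemma sq_mul_mem_commutatorB (hθ : ∀ x : K, θ (θ x) = x ^ 3) (a₀ t : K) :
    t ^ 2 * (a₀ - θ a₀) ∈ commutatorB (θ := θ) := by
  obtain ⟨s, hs⟩ := RingHom.exists_mul_map_eq_sq hθ t
  have hmem := Subgroup.commutator_mem_commutator (Subgroup.mem_top (⟨s * a₀, 0, 0⟩ : ReeGp K θ))
    (Subgroup.mem_top (⟨s, 0, 0⟩ : ReeGp K θ))
  rw [commutatorElement_mk_a] at hmem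
  have hb : t ^ 2 * (a₀ - θ a₀) = s * a₀ * θ s - s * θ (s * a₀) := by
    rw [map_mul, ← hs]
    ring
  exact hb ▸ ⟨_, hmem⟩

lemma commutatorB_eq_top [CharP K 3] (hθ : ∀ x : K, θ (θ x) = x ^ 3) {a₀ : K}
    (ha₀ : θ a₀ ≠ a₀) : commutatorB (θ := θ) = ⊤ := by
  have hb₀ : a₀ - θ a₀ ≠ 0 := sub_ne_zero.2 ha₀.symm
  have h2 : (2 : K) ≠ 0 := Ring.two_ne_zero (by rw [ringChar.eq K 3]; decide)
  have htop := AddSubgroup.eq_top_of_forall_sq_mem h2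
    (commutatorB.comap (AddMonoidHom.mulRight (a₀ - θ a₀))) (sq_mul_mem_commutatorB hθ a₀)
  refine eq_top_iff.2 fun b _ => ?_
  have hmem : b / (a₀ - θ a₀) ∈ commutatorB.comap (AddMonoidHom.mulRight (a₀ - θ a₀)) :=
    htop ▸ AddSubgroup.mem_top _
  simpa [div_mul_cancel₀ b hb₀] using hmem

end ReeGp

theorem stmt_17 {K : Type*} [Field K] [CharP K 3] (θ : K →+* K)
    (hθ : ∀ x : K, θ (θ x) = x ^ 3) (hK : 3 < Nat.card K ∨ Infinite K) :
    ∀ x : ReeGp K θ, x ∈ commutator (ReeGp K θ) ↔ x.a = 0 := by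
  obtain ⟨a₀, ha₀⟩ := RingHom.exists_map_ne_self hθ hK
  rintro ⟨a, b, c⟩
  refine ⟨ReeGp.a_eq_zero_of_mem_commutator_s17, fun ha => ?_⟩
  subst ha
  rw [ReeGp.mk_zero_mem_commutator_iff, ReeGp.commutatorB_eq_top hθ ha₀]
  exact AddSubgroup.mem_top b
end

section
/- Let η be the automorphism of the Ree root group Ξ_θ(K) given by η(a,b,c) = (−a, b, −c). Then η is an involutory automorphism, and an element σ = η∘(right translation by ξ), with ξ = (a,b,c) ∈ Ξ, squares to the identity if and only if b = −a^{θ+1}. -/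
/-!
For an involutive automorphism `η`, the map `σ x = η x * ξ` satisfies `σ (σ x) = x * (η ξ * ξ)`,
so `σ ∘ σ = id` iff `η ξ * ξ = 1`. For the Ree group, `η ξ * ξ = (0, 2b - a θ(a), -a (2b - a θ(a)))`,
and `2 = -1` in characteristic 3.
-/

theorem MonoidHom.comp_self_mul_right_eq_id_iff {M : Type*} [Monoid M] (f : M →* M)
    (hf : Function.Involutive f) (ξ : M) :
    (fun x => f x * ξ) ∘ (fun x => f x * ξ) = _root_.id ↔ f ξ * ξ = 1 := by
  have hsq : ∀ x, f (f x * ξ) * ξ = x * (f ξ * ξ) := fun x => by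
    rw [map_mul, hf x, mul_assoc]
  constructor
  · intro h
    simpa [hsq] using congrFun h 1
  · intro h
    funext x
    simp only [Function.comp_apply, hsq, h, mul_one, _root_.id_eq]

namespace ReeGp

variable {K : Type*} [Field K] {θ : K →+* K}

def eta : ReeGp K θ →* ReeGp K θ where
  toFun x := ⟨-x.a, x.b, -x.c⟩
  map_one' := by ext <;> simp
  map_mul' x y := by ext <;> simp [map_neg] <;> ring

@[simp] lemma eta_apply (x : ReeGp K θ) : eta x = ⟨-x.a, x.b, -x.c⟩ := rfl

lemma eta_involutive : Function.Involutive (eta : ReeGp K θ →* ReeGp K θ) := fun x => by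
  ext <;> simp

lemma eta_mul_self_eq_one_iff [CharP K 3] (ξ : ReeGp K θ) :
    eta ξ * ξ = 1 ↔ ξ.b = -(θ ξ.a * ξ.a) := by
  have h3 : (3 : K) = 0 := CharP.cast_eq_zero K 3
  constructor
  · intro h
    have hb := congrArg ReeGp.b h
    simp only [mul_b, eta_apply, neg_mul, one_b] at hb
    linear_combination -hb + ξ.b * h3
  · intro hb
    ext <;> simp [hb]
    · linear_combination (-(θ ξ.a * ξ.a)) * h3
    · linear_combination ξ.a ^ 2 * θ ξ.a * h3

end ReeGp

theorem stmt_18_general {K : Type*} [Field K] [CharP K 3] (θ : K →+* K)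
    (η : ReeGp K θ → ReeGp K θ) (hη : ∀ x, η x = (⟨-x.a, x.b, -x.c⟩ : ReeGp K θ)) :
    (∀ x y : ReeGp K θ, η (x * y) = η x * η y) ∧
    Function.Bijective η ∧
    η ∘ η = id ∧
    (∀ ξ : ReeGp K θ,
      ((fun x => η x * ξ) ∘ (fun x => η x * ξ) = id) ↔ ξ.b = -(θ ξ.a * ξ.a)) := by
  obtain rfl : η = ReeGp.eta := funext hη
  exact ⟨map_mul ReeGp.eta, ReeGp.eta_involutive.bijective, ReeGp.eta_involutive.comp_self,
    fun ξ => (ReeGp.eta.comp_self_mul_right_eq_id_iff ReeGp.eta_involutive ξ).trans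
      (ReeGp.eta_mul_self_eq_one_iff ξ)⟩

theorem stmt_18 {K : Type*} [Field K] [CharP K 3] (θ : K →+* K)
    (hθ : ∀ x : K, θ (θ x) = x ^ 3)
    (η : ReeGp K θ → ReeGp K θ) (hη : ∀ x, η x = (⟨-x.a, x.b, -x.c⟩ : ReeGp K θ)) :
    (∀ x y : ReeGp K θ, η (x * y) = η x * η y) ∧
    Function.Bijective η ∧
    η ∘ η = id ∧
    (∀ ξ : ReeGp K θ,
      ((fun x => η x * ξ) ∘ (fun x => η x * ξ) = id) ↔ ξ.b = -(θ ξ.a * ξ.a)) :=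
  stmt_18_general θ η hη
end
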